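/- arXiv:1403.6109 — 5 statements merged into one kernel-verified Lean document; each statement's English description precedes it below -/
import Mathlib

section
/- Let M₁ and M₂ be symmetric n×n matrices with zero diagonal over a commutative ring. Then Σ_{i=1}^n [[M₁, e_i], [M₂, e_i]] = -[M₁, M₂] and Σ_{i=1}^n [[[M₁, e_i], M₂], e_i] = [M₁, M₂]. -/
/-!
Both identities hold in any ring for a family `E i` with `∑ E i * E i = 1`, provided the
"diagonal part" `X ↦ ∑ E i * X * E i` kills `A` and `B` and agrees on `A * B` and `B * A`:
expanding the brackets, every term is either such a diagonal part or, via `∑ E i * E i = 1`,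
one of `A * B`, `B * A`. For the matrix units `e_i` the diagonal part of `X` is
`diagonal X.diag`, which vanishes on zero-diagonal matrices, and `(M₁ * M₂).diag = (M₂ * M₁).diag`
by transposing when `M₁`, `M₂` are symmetric.
-/

/-- Commutator of matrices. -/
def mbr {n : ℕ} {R : Type*} [Ring R] (A B : Matrix (Fin n) (Fin n) R) :
    Matrix (Fin n) (Fin n) R :=
  A * B - B * A

/-- The diagonal matrix unit `e_k` with a single `1` at position `(k,k)`. -/
def eMat {n : ℕ} (R : Type*) [Semiring R] (k : Fin n) : Matrix (Fin n) (Fin n) R :=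
  Matrix.single k k 1

section Ring

variable {α ι : Type*} [Ring α] [Fintype ι] {E : ι → α} {A B : α}

theorem sum_lie_lie_lie_eq_neg_lie (hE : ∑ i, E i * E i = 1)
    (hA : ∑ i, E i * A * E i = 0) (hB : ∑ i, E i * B * E i = 0)
    (hAB : ∑ i, E i * (A * B) * E i = ∑ i, E i * (B * A) * E i) :
    ∑ i, ⁅⁅A, E i⁆, ⁅B, E i⁆⁆ = -⁅A, B⁆ := by
  have expand : ∀ i, ⁅⁅A, E i⁆, ⁅B, E i⁆⁆ =
      A * (E i * B * E i) - A * (E i * E i) * B - E i * (A * B) * E i + E i * A * E i * B -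
        (B * (E i * A * E i) - B * (E i * E i) * A - E i * (B * A) * E i + E i * B * E i * A) := by
    intro i
    simp only [Ring.lie_def]
    noncomm_ring
  calc ∑ i, ⁅⁅A, E i⁆, ⁅B, E i⁆⁆
      = A * ∑ i, E i * B * E i - A * (∑ i, E i * E i) * B - ∑ i, E i * (A * B) * E i +
          (∑ i, E i * A * E i) * B - (B * ∑ i, E i * A * E i - B * (∑ i, E i * E i) * A -
            ∑ i, E i * (B * A) * E i + (∑ i, E i * B * E i) * A) := by
        simp only [expand, Finset.mul_sum, Finset.sum_mul, Finset.sum_sub_distrib,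
          Finset.sum_add_distrib]
    _ = -⁅A, B⁆ := by
        rw [hE, hA, hB, hAB, Ring.lie_def]
        noncomm_ring

theorem sum_lie_lie_lie_eq_lie (hE : ∑ i, E i * E i = 1)
    (hA : ∑ i, E i * A * E i = 0) (hB : ∑ i, E i * B * E i = 0)
    (hAB : ∑ i, E i * (A * B) * E i = ∑ i, E i * (B * A) * E i) :
    ∑ i, ⁅⁅⁅A, E i⁆, B⁆, E i⁆ = ⁅A, B⁆ := by
  have expand : ∀ i, ⁅⁅⁅A, E i⁆, B⁆, E i⁆ =
      A * (E i * B * E i) - E i * (A * B) * E i - (B * A * (E i * E i) - B * (E i * A * E i)) -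
        (E i * A * E i * B - (E i * E i) * A * B) + (E i * (B * A) * E i - E i * B * E i * A) := by
    intro i
    simp only [Ring.lie_def]
    noncomm_ring
  calc ∑ i, ⁅⁅⁅A, E i⁆, B⁆, E i⁆
      = A * ∑ i, E i * B * E i - ∑ i, E i * (A * B) * E i -
          (B * A * ∑ i, E i * E i - B * ∑ i, E i * A * E i) -
          ((∑ i, E i * A * E i) * B - (∑ i, E i * E i) * A * B) +
          (∑ i, E i * (B * A) * E i - (∑ i, E i * B * E i) * A) := by
        simp only [expand, Finset.mul_sum, Finset.sum_mul, Finset.sum_sub_distrib,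
          Finset.sum_add_distrib]
    _ = ⁅A, B⁆ := by
        rw [hE, hA, hB, hAB, Ring.lie_def]
        noncomm_ring

end Ring

section Matrix

variable {n : ℕ} {R : Type*}

theorem mbr_eq_lie [Ring R] (A B : Matrix (Fin n) (Fin n) R) : mbr A B = ⁅A, B⁆ :=
  (Ring.lie_def A B).symm

theorem sum_eMat_mul_self [Semiring R] : ∑ k : Fin n, eMat R k * eMat R k = 1 := by
  simp only [eMat, Matrix.single_mul_single_same, mul_one, Matrix.sum_single_one]

theorem sum_eMat_mul_mul_eMat [Semiring R] (X : Matrix (Fin n) (Fin n) R) :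
    ∑ k, eMat R k * X * eMat R k = Matrix.diagonal X.diag := by
  simp only [eMat, Matrix.single_mul_mul_single, one_mul, mul_one]
  exact Matrix.sum_single_eq_diagonal X.diag

theorem Matrix.IsSymm.diag_mul_comm [CommSemiring R] {A B : Matrix (Fin n) (Fin n) R}
    (hA : A.IsSymm) (hB : B.IsSymm) : (A * B).diag = (B * A).diag := by
  rw [← Matrix.diag_transpose, Matrix.transpose_mul, hA.eq, hB.eq]

end Matrix

theorem stmt_3 {n : ℕ} {R : Type*} [CommRing R] (M₁ M₂ : Matrix (Fin n) (Fin n) R)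
    (h₁sym : M₁.transpose = M₁) (h₂sym : M₂.transpose = M₂)
    (h₁diag : ∀ i, M₁ i i = 0) (h₂diag : ∀ i, M₂ i i = 0) :
    (∑ i : Fin n, mbr (mbr M₁ (eMat R i)) (mbr M₂ (eMat R i)) = -(mbr M₁ M₂)) ∧
    (∑ i : Fin n, mbr (mbr (mbr M₁ (eMat R i)) M₂) (eMat R i) = mbr M₁ M₂) := by
  have diagonal_eq_zero {M : Matrix (Fin n) (Fin n) R} (hM : ∀ i, M i i = 0) :
      Matrix.diagonal M.diag = 0 :=
    Matrix.diagonal_eq_zero.mpr (funext hM)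
  have h₁ := (sum_eMat_mul_mul_eMat M₁).trans (diagonal_eq_zero h₁diag)
  have h₂ := (sum_eMat_mul_mul_eMat M₂).trans (diagonal_eq_zero h₂diag)
  have h₁₂ : ∑ i, eMat R i * (M₁ * M₂) * eMat R i = ∑ i, eMat R i * (M₂ * M₁) * eMat R i := by
    rw [sum_eMat_mul_mul_eMat, sum_eMat_mul_mul_eMat, Matrix.IsSymm.diag_mul_comm h₁sym h₂sym]
  simp only [mbr_eq_lie]
  exact ⟨sum_lie_lie_lie_eq_neg_lie sum_eMat_mul_self h₁ h₂ h₁₂,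
    sum_lie_lie_lie_eq_lie sum_eMat_mul_self h₁ h₂ h₁₂⟩
end

section
/- Let n ≥ 2. The center of the Lie algebra 𝔤₋ = {Σ_{i=-p}^{-1} λⁱ Pᵢ : Pᵢᵀ = (-1)^{i+1}Pᵢ, Pᵢ ∈ glₙ(𝕂)} (with bracket [P,Q]ₖ = Σ_{i+j=k}[Pᵢ,Qⱼ], truncating all terms with λ-degree ≥ 0) is exactly the span of the elements λ^{-(2s+1)} E for s ≥ 0, where E is the identity matrix. -/
/-- The twisted loop algebra condition: the `i`-th coefficient `Pᵢ` of a matrix-valued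
Laurent polynomial satisfies `Pᵢᵀ = (-1)^(i+1) Pᵢ`. -/
def twistedCondition {n : ℕ} {K : Type*} [Field K]
    (P : LaurentPolynomial (Matrix (Fin n) (Fin n) K)) : Prop :=
  ∀ i : ℤ, (P.coeff i).transpose = ((-1 : K) ^ (i + 1)) • (P.coeff i)

/-- Membership in the negative part `𝔤₋` of the twisted loop algebra. -/
def memMinus {n : ℕ} {K : Type*} [Field K]
    (P : LaurentPolynomial (Matrix (Fin n) (Fin n) K)) : Prop :=
  twistedCondition P ∧ ∀ i : ℤ, 0 ≤ i → P.coeff i = 0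

/-!
Testing `Z` against `λ⁻¹ A` with `A` symmetric and `λ⁻² A` with `A` skew-symmetric shows that
every coefficient of `Z` commutes with all symmetric and all skew matrices, hence (as `2` is
invertible) with all matrices, so it is scalar. A scalar matrix is symmetric, while the twisting
condition makes the coefficients of even degree skew, so these vanish. Conversely, powers of `λ`
are central.
-/

open Matrix LaurentPolynomial

namespace AddMonoidAlgebra

variable {R G : Type*} [Semiring R] [AddCommGroup G]

theorem commute_coeff_of_commute_single {f : AddMonoidAlgebra R G} {g : G} {r : R}
    (h : Commute f (single g r)) (i : G) : Commute (f.coeff i) r := by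
  show f.coeff i * r = r * f.coeff i
  simpa using congrArg (fun x => x.coeff (i + g)) h.eq

end AddMonoidAlgebra

namespace Matrix

variable {m R : Type*} [Fintype m] [DecidableEq m] [CommRing R] [Invertible (2 : R)]

theorem commute_of_commute_symm_of_commute_skew {M : Matrix m m R}
    (hsymm : ∀ A : Matrix m m R, Aᵀ = A → Commute M A)
    (hskew : ∀ A : Matrix m m R, Aᵀ = -A → Commute M A) (X : Matrix m m R) :
    Commute M X := by
  have hX : X = (⅟2 : R) • (X + Xᵀ) + (⅟2 : R) • (X - Xᵀ) := by
    rw [← smul_add, add_add_sub_cancel, ← two_smul R X, smul_smul, invOf_mul_self, one_smul]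
  rw [hX]
  refine (hsymm _ ?_).add_right (hskew _ ?_)
  · simp [add_comm]
  · rw [transpose_smul, transpose_sub, transpose_transpose, ← smul_neg, neg_sub]

theorem mem_range_scalar_of_commute_symm_of_commute_skew {M : Matrix m m R}
    (hsymm : ∀ A : Matrix m m R, Aᵀ = A → Commute M A)
    (hskew : ∀ A : Matrix m m R, Aᵀ = -A → Commute M A) :
    M ∈ Set.range (scalar m) :=
  mem_range_scalar_iff_commute_single'.mpr fun _ _ =>
    (commute_of_commute_symm_of_commute_skew hsymm hskew _).symm

theorem eq_zero_of_mem_range_scalar_of_transpose_eq_neg {M : Matrix m m R}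
    (hM : M ∈ Set.range (scalar m)) (hskew : Mᵀ = -M) : M = 0 := by
  obtain ⟨c, rfl⟩ := hM
  have hsymm : (scalar m c)ᵀ = scalar m c := diagonal_transpose _
  calc scalar m c = (⅟2 : R) • (scalar m c + scalar m c) := by
        rw [← two_smul R, smul_smul, invOf_mul_self, one_smul]
    _ = 0 := by
        nth_rewrite 2 [← hsymm]
        rw [hskew, add_neg_cancel, smul_zero]

end Matrix

namespace LaurentPolynomial

theorem setOf_eq_image_T_negOdd {A : Type*} [Semiring A] :
    {X : A[T;T⁻¹] | ∃ s : ℕ, X = AddMonoidAlgebra.ofCoeff (Finsupp.single (-(2 * (s : ℤ) + 1)) 1)} =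
      T '' {i | i < 0 ∧ Odd i} := by
  ext X
  constructor
  · rintro ⟨s, rfl⟩
    exact ⟨_, ⟨by omega, -(s : ℤ) - 1, by ring⟩, rfl⟩
  · rintro ⟨i, ⟨hneg, m, rfl⟩, rfl⟩
    exact ⟨(-m - 1).toNat, by rw [Int.toNat_of_nonneg (by omega)]; congr 2; ring⟩

variable {K A : Type*} [CommSemiring K] [Semiring A] [Algebra K A]

theorem span_T_le_center : Submodule.span K (Set.range (T : ℤ → A[T;T⁻¹])) ≤
    (Subalgebra.center K A[T;T⁻¹]).toSubmodule :=
  Submodule.span_le.mpr <| Set.range_subset_iff.mpr fun i =>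
    (Subalgebra.mem_center_iff (R := K)).mpr fun f => (commute_T i f).eq.symm

theorem mem_span_T_of_coeff {S : Set ℤ} (f : A[T;T⁻¹]) (hsupp : ∀ i, f.coeff i ≠ 0 → i ∈ S)
    (hscal : ∀ i, f.coeff i ∈ Set.range (algebraMap K A)) :
    f ∈ Submodule.span K (T '' S) := by
  rw [← AddMonoidAlgebra.sum_coeff_single f]
  refine Submodule.finsuppSum_mem K _ _ _ fun i hi => ?_
  obtain ⟨c, hc⟩ := hscal i
  rw [← hc, Algebra.algebraMap_eq_smul_one, ← AddMonoidAlgebra.smul_single]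
  exact Submodule.smul_mem _ c (Submodule.subset_span ⟨i, hsupp i hi, rfl⟩)

end LaurentPolynomial

section NegativeTwistedLoop

variable {n : ℕ} {K : Type*} [Field K]

theorem memMinus_single {d : ℤ} (hd : d < 0) {A : Matrix (Fin n) (Fin n) K}
    (hA : Aᵀ = (-1 : K) ^ (d + 1) • A) :
    memMinus (AddMonoidAlgebra.single d A : LaurentPolynomial (Matrix (Fin n) (Fin n) K)) := by
  refine ⟨fun j => ?_, fun j hj => Finsupp.single_eq_of_ne (by omega)⟩
  rw [AddMonoidAlgebra.coeff_single]
  rcases eq_or_ne d j with rfl | hdj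
  · rwa [Finsupp.single_eq_same]
  · rw [Finsupp.single_eq_of_ne hdj.symm, transpose_zero, smul_zero]

variable [CharZero K] {Z : LaurentPolynomial (Matrix (Fin n) (Fin n) K)}

theorem coeff_mem_range_scalar_of_forall_commute (hZ : ∀ P, memMinus P → Commute Z P) (i : ℤ) :
    Z.coeff i ∈ Set.range (scalar (Fin n)) := by
  have hcomm : ∀ d : ℤ, d < 0 → ∀ A : Matrix (Fin n) (Fin n) K, Aᵀ = (-1 : K) ^ (d + 1) • A →
      Commute (Z.coeff i) A := fun d hd A hA =>
    AddMonoidAlgebra.commute_coeff_of_commute_single (hZ _ (memMinus_single hd hA)) i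
  refine mem_range_scalar_of_commute_symm_of_commute_skew
    (fun A hA => hcomm (-1) (by norm_num) A ?_) (fun A hA => hcomm (-2) (by norm_num) A ?_)
  · simpa using hA
  · simpa using hA

theorem coeff_eq_zero_of_even (hZ : twistedCondition Z) {i : ℤ}
    (hscal : Z.coeff i ∈ Set.range (scalar (Fin n))) (hi : Even i) : Z.coeff i = 0 :=
  eq_zero_of_mem_range_scalar_of_transpose_eq_neg hscal <| by
    rw [hZ i, hi.add_one.neg_one_zpow, neg_one_smul]

end NegativeTwistedLoop

/- For elements of `𝔤₋` the commutator only has λ-degrees `≤ -2`, so the truncated bracket is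
the honest commutator `Z * P - P * Z`. -/
theorem stmt_9_general {n : ℕ} {K : Type*} [Field K] [CharZero K]
    (Z : LaurentPolynomial (Matrix (Fin n) (Fin n) K)) (hZ : memMinus Z) :
    (∀ P : LaurentPolynomial (Matrix (Fin n) (Fin n) K),
        memMinus P → Z * P - P * Z = 0) ↔
    Z ∈ Submodule.span K
      {X : LaurentPolynomial (Matrix (Fin n) (Fin n) K) |
        ∃ s : ℕ, X = AddMonoidAlgebra.ofCoeff (Finsupp.single (-(2 * (s : ℤ) + 1)) (1 : Matrix (Fin n) (Fin n) K))} := by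
  rw [setOf_eq_image_T_negOdd]
  constructor
  · intro hcentral
    have hscal := coeff_mem_range_scalar_of_forall_commute fun P hP =>
      sub_eq_zero.mp (hcentral P hP)
    refine mem_span_T_of_coeff Z (fun i hi => ⟨?_, ?_⟩) hscal
    · exact lt_of_not_ge fun h => hi (hZ.2 i h)
    · exact Int.not_even_iff_odd.mp fun he => hi (coeff_eq_zero_of_even hZ.1 (hscal i) he)
  · intro hmem P _
    have hcenter := span_T_le_center (Submodule.span_mono (Set.image_subset_range _ _) hmem)
    exact sub_eq_zero.mpr ((Subalgebra.mem_center_iff (R := K)).mp hcenter P).symm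

/-- The center of `𝔤₋` is exactly the span of the elements `λ^{-(2s+1)} E`, `s ≥ 0`.
(For elements of `𝔤₋`, the commutator has only λ-degrees `≤ -2`, so the truncated
bracket coincides with the honest commutator.) -/
theorem stmt_9 {n : ℕ} {K : Type*} [Field K] [CharZero K] (hn : 2 ≤ n)
    (Z : LaurentPolynomial (Matrix (Fin n) (Fin n) K)) (hZ : memMinus Z) :
    (∀ P : LaurentPolynomial (Matrix (Fin n) (Fin n) K),
        memMinus P → Z * P - P * Z = 0) ↔
    Z ∈ Submodule.span K
      {X : LaurentPolynomial (Matrix (Fin n) (Fin n) K) |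
        ∃ s : ℕ, X = AddMonoidAlgebra.ofCoeff (Finsupp.single (-(2 * (s : ℤ) + 1)) (1 : Matrix (Fin n) (Fin n) K))} :=
  stmt_9_general Z hZ
end

section
/- Let b : ℝⁿ → Matₙ(ℝ) be a smooth function valued in symmetric n×n matrices with zero diagonal whose entries β_{ij} satisfy the Darboux–Egoroff system (∂_k β_{ij} = β_{ik}β_{kj} for pairwise distinct i,j,k, and Σ_s ∂_s β_{ij} = 0). Then for every scalar λ the matrices A^k = λ e_k + [b, e_k], k = 1,…,n, satisfy the zero-curvature equations ∂_l A^k - ∂_k A^l + [A^k, A^l] = 0 for all k, l. -/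
/-- Partial derivative in the `k`-th coordinate direction. -/
noncomputable def pd {n : ℕ} (k : Fin n) (f : (Fin n → ℝ) → ℝ) (x : Fin n → ℝ) : ℝ :=
  fderiv ℝ f x (Pi.single k 1)

lemma entry_eq' {n : ℕ} (β : Fin n → Fin n → (Fin n → ℝ) → ℝ) (lam : ℝ) (k : Fin n)
    (y : Fin n → ℝ) (a b : Fin n) :
    (lam • eMat ℝ k + mbr (Matrix.of fun a b => β a b y) (eMat ℝ k)) a b
      = (if a = k ∧ b = k then lam else 0)
        + (if b = k then β a k y else 0) - (if a = k then β k b y else 0) := by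
  simp [eMat, mbr, Matrix.add_apply, Matrix.sub_apply, Matrix.smul_apply,
    Matrix.mul_apply, Matrix.single, Matrix.of_apply, ite_and, mul_ite, ite_mul,
    Finset.sum_ite_eq, Finset.sum_ite_eq', eq_comm]
  ring

lemma pd_entry' {n : ℕ} (β : Fin n → Fin n → (Fin n → ℝ) → ℝ) (lam : ℝ) (k l : Fin n)
    (x : Fin n → ℝ) (i j : Fin n) :
    pd l (fun y => (lam • eMat ℝ k + mbr (Matrix.of fun a b => β a b y) (eMat ℝ k)) i j) x
      = (if j = k then pd l (β i k) x else 0) - (if i = k then pd l (β k j) x else 0) := by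
  simp only [entry_eq']
  by_cases hj : j = k <;> by_cases hi : i = k <;>
    simp only [hj, hi, if_pos, if_neg, if_true, if_false, ite_true, ite_false] <;>
    simp [pd, fderiv_const_add, fderiv_const, fderiv_sub_const, fderiv_add_const]

lemma sum_entry' {n : ℕ} (β : Fin n → Fin n → (Fin n → ℝ) → ℝ) (lam : ℝ) (k l : Fin n)
    (hkl : k ≠ l) (x : Fin n → ℝ) (i j : Fin n) :
    ∑ s, (lam • eMat ℝ k + mbr (Matrix.of fun a b => β a b x) (eMat ℝ k)) i s
        * (lam • eMat ℝ l + mbr (Matrix.of fun a b => β a b x) (eMat ℝ l)) s j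
      = (if j = l then β i k x * β k l x else 0)
        + (if i = k then β k l x * β l j x else 0)
        - (if i = k ∧ j = l then ∑ s, β k s x * β s l x else 0) := by
  simp only [entry_eq']
  by_cases hik : i = k <;> by_cases hjl : j = l <;>
    simp [hik, hjl, hkl, hkl.symm, ite_and, mul_ite, ite_mul, mul_zero, zero_mul,
      Finset.sum_ite_eq, Finset.sum_ite_eq', sub_mul, mul_sub, add_mul, mul_add,
      Finset.sum_add_distrib, Finset.sum_sub_distrib, Finset.mul_sum] <;>
    ring

theorem stmt_16 {n : ℕ} (β : Fin n → Fin n → (Fin n → ℝ) → ℝ)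
    (hsmooth : ∀ i j, ContDiff ℝ (⊤ : ℕ∞) (β i j))
    (hsym : ∀ i j, β i j = β j i)
    (hdiag : ∀ i, β i i = 0)
    (hDE : ∀ i j k, i ≠ j → j ≠ k → i ≠ k →
      ∀ x, pd k (β i j) x = β i k x * β k j x)
    (hsum : ∀ i j, i ≠ j → ∀ x, ∑ s : Fin n, pd s (β i j) x = 0)
    (lam : ℝ) :
    ∀ (k l : Fin n) (x : Fin n → ℝ) (i j : Fin n),
      pd l (fun y =>
          (lam • eMat ℝ k + mbr (Matrix.of fun a b => β a b y) (eMat ℝ k)) i j) x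
        - pd k (fun y =>
          (lam • eMat ℝ l + mbr (Matrix.of fun a b => β a b y) (eMat ℝ l)) i j) x
        + (mbr (lam • eMat ℝ k + mbr (Matrix.of fun a b => β a b x) (eMat ℝ k))
               (lam • eMat ℝ l + mbr (Matrix.of fun a b => β a b x) (eMat ℝ l))) i j = 0 := by
  intro k l x i j
  have hβx : ∀ a, β a a x = 0 := fun a => congrFun (hdiag a) x
  by_cases hkl : k = l
  · subst hkl
    simp [mbr]
  · -- key lemma: for a ≠ b
    have key : ∀ a b : Fin n, a ≠ b →
        pd a (β a b) x + pd b (β a b) x + ∑ s, β a s x * β s b x = 0 := by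
      intro a b hab
      have h0 := hsum a b hab x
      have hterm : ∀ s : Fin n, pd s (β a b) x
          = β a s x * β s b x + ((if s = a then pd a (β a b) x else 0)
            + (if s = b then pd b (β a b) x else 0)) := by
        intro s
        by_cases hsa : s = a
        · subst hsa
          simp [hβx, hab]
        · by_cases hsb : s = b
          · subst hsb
            simp [hβx, hsa]
          · rw [hDE a b s hab (Ne.symm hsb) (Ne.symm hsa)]
            simp [hsa, hsb]
      rw [Finset.sum_congr rfl (fun s _ => hterm s)] at h0
      rw [Finset.sum_add_distrib, Finset.sum_add_distrib, Finset.sum_ite_eq',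
        Finset.sum_ite_eq'] at h0
      simp at h0
      linarith
    have hS : ∑ s, β l s x * β s k x = ∑ s, β k s x * β s l x :=
      Finset.sum_congr rfl (fun s _ => by rw [hsym l s, hsym s k]; ring)
    rw [pd_entry', pd_entry']
    have hcomm : (mbr (lam • eMat ℝ k + mbr (Matrix.of fun a b => β a b x) (eMat ℝ k))
               (lam • eMat ℝ l + mbr (Matrix.of fun a b => β a b x) (eMat ℝ l))) i j
        = (∑ s, (lam • eMat ℝ k + mbr (Matrix.of fun a b => β a b x) (eMat ℝ k)) i s
            * (lam • eMat ℝ l + mbr (Matrix.of fun a b => β a b x) (eMat ℝ l)) s j)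
          - (∑ s, (lam • eMat ℝ l + mbr (Matrix.of fun a b => β a b x) (eMat ℝ l)) i s
            * (lam • eMat ℝ k + mbr (Matrix.of fun a b => β a b x) (eMat ℝ k)) s j) := by
      simp [mbr, Matrix.sub_apply, Matrix.mul_apply]
    rw [hcomm, sum_entry' β lam k l hkl x i j, sum_entry' β lam l k (Ne.symm hkl) x i j]
    rcases eq_or_ne i k with hik | hik
    · subst hik
      rcases eq_or_ne j i with hjk | hjk
      · subst hjk
        simp [hkl]
      · rcases eq_or_ne j l with hjl | hjl
        · subst hjl
          have := key i j hkl
          simp [hkl, Ne.symm hkl, hβx]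
          linarith
        · have := hDE i j l (Ne.symm hjk) hjl hkl x
          simp [hkl, hjk, hjl, Ne.symm hjk]
          linarith
    · rcases eq_or_ne i l with hil | hil
      · subst hil
        rcases eq_or_ne j k with hjk | hjk
        · subst hjk
          simp [hik, Ne.symm hik, hβx]
          exact key i j hik
        · rcases eq_or_ne j i with hjl | hjl
          · subst hjl
            simp [hik, Ne.symm hik, hjk]
          · have := hDE i j k (Ne.symm hjl) hjk hik x
            simp [hik, hjk, hjl, Ne.symm hjl]
            linarith
      · rcases eq_or_ne j k with hjk | hjk
        · subst hjk
          have := hDE i j l hik hkl hil x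
          simp [hik, hil, hkl, Ne.symm hkl]
          linarith
        · rcases eq_or_ne j l with hjl | hjl
          · subst hjl
            have := hDE i j k hil (Ne.symm hkl) hik x
            simp [hik, hil, hjk, Ne.symm hkl]
            linarith
          · simp [hik, hil, hjk, hjl]
end

section
/- Let b, B : ℝⁿ → Matₙ(ℝ) be smooth functions valued in symmetric matrices with zero diagonal, such that b satisfies the matrix Darboux–Egoroff system ∂_l[b,e_k] - ∂_k[b,e_l] + [[b,e_k],[b,e_l]] = 0 and B satisfies its linearization ∂_l[B,e_k] - ∂_k[B,e_l] + [[B,e_k],[b,e_l]] + [[b,e_k],[B,e_l]] = 0, for all k, l. Then the system of equations ∂_k P = diag[[b,e_k],B], k = 1,…,n, for a diagonal matrix P is compatible: the cross-derivative condition ∂_l diag[[b,e_k],B] = ∂_k diag[[b,e_l],B] holds for all k, l. -/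
/-- Diagonal part of a square matrix. -/
def diagPart {n : ℕ} {R : Type*} [Semiring R] (P : Matrix (Fin n) (Fin n) R) :
    Matrix (Fin n) (Fin n) R :=
  Matrix.diagonal (fun i => P i i)

lemma comm_e_apply {n : ℕ} (M : Matrix (Fin n) (Fin n) ℝ) (k i j : Fin n) :
    mbr M (eMat ℝ k) i j = (if j = k then M i k else 0) - (if i = k then M k j else 0) := by
  by_cases hj : j = k <;> by_cases hi : i = k <;> simp [mbr, eMat, hj, hi]

lemma prod_entry {n : ℕ} (M N : Matrix (Fin n) (Fin n) ℝ) (k l i j : Fin n) :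
    (mbr M (eMat ℝ k) * mbr N (eMat ℝ l)) i j
      = (if j = l then M i k * N k l else 0) - (if k = l then M i k * N l j else 0)
        - (if i = k ∧ j = l then ∑ m, M k m * N m l else 0)
        + (if i = k then M k l * N l j else 0) := by
  by_cases hj : j = l <;> by_cases hi : i = k <;> by_cases hkl : k = l <;>
    simp [Matrix.mul_apply, comm_e_apply, hj, hi, hkl, sub_mul, mul_sub,
      Finset.sum_sub_distrib, ite_mul, mul_ite, Finset.sum_ite_eq, Finset.sum_ite_eq',
      eq_comm] <;>
    ring

lemma comm_comm_entry {n : ℕ} (M N : Matrix (Fin n) (Fin n) ℝ) (k l i j : Fin n) :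
    mbr (mbr M (eMat ℝ k)) (mbr N (eMat ℝ l)) i j
      = ((if j = l then M i k * N k l else 0) - (if k = l then M i k * N l j else 0)
        - (if i = k ∧ j = l then ∑ m, M k m * N m l else 0)
        + (if i = k then M k l * N l j else 0))
      - ((if j = k then N i l * M l k else 0) - (if l = k then N i l * M k j else 0)
        - (if i = l ∧ j = k then ∑ m, N l m * M m k else 0)
        + (if i = l then N l k * M k j else 0)) := by
  have h2 : (mbr N (eMat ℝ l) * mbr M (eMat ℝ k)) i j = _ := prod_entry N M l k i j
  rw [show mbr (mbr M (eMat ℝ k)) (mbr N (eMat ℝ l)) i j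
      = (mbr M (eMat ℝ k) * mbr N (eMat ℝ l)) i j
        - (mbr N (eMat ℝ l) * mbr M (eMat ℝ k)) i j from rfl,
    prod_entry, h2]

-- pd calculus
lemma pd_congr {n : ℕ} {k : Fin n} {f g : (Fin n → ℝ) → ℝ} (h : ∀ y, f y = g y) (x : Fin n → ℝ) :
    pd k f x = pd k g x := by
  unfold pd; rw [funext h]

lemma pd_const {n : ℕ} (k : Fin n) (c : ℝ) (x : Fin n → ℝ) : pd k (fun _ => c) x = 0 := by
  simp [pd]

lemma pd_neg {n : ℕ} (k : Fin n) (f : (Fin n → ℝ) → ℝ) (x : Fin n → ℝ) :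
    pd k (fun y => -f y) x = -pd k f x := by
  simp [pd, fderiv_neg]

lemma pd_mul {n : ℕ} {k : Fin n} {f g : (Fin n → ℝ) → ℝ} {x : Fin n → ℝ}
    (hf : DifferentiableAt ℝ f x) (hg : DifferentiableAt ℝ g x) :
    pd k (fun y => f y * g y) x = pd k f x * g x + f x * pd k g x := by
  simp [pd, fderiv_fun_mul hf hg]; ring

lemma pd_sum {n : ℕ} {k : Fin n} {ι : Type*} (s : Finset ι) (f : ι → (Fin n → ℝ) → ℝ)
    {x : Fin n → ℝ} (h : ∀ i ∈ s, DifferentiableAt ℝ (f i) x) :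
    pd k (fun y => ∑ i ∈ s, f i y) x = ∑ i ∈ s, pd k (f i) x := by
  simp [pd, fderiv_fun_sum h]

lemma pd_const_mul {n : ℕ} {k : Fin n} {f : (Fin n → ℝ) → ℝ} {x : Fin n → ℝ} (c : ℝ)
    (hf : DifferentiableAt ℝ f x) :
    pd k (fun y => c * f y) x = c * pd k f x := by
  simp [pd, fderiv_const_mul hf]

theorem stmt_17 {n : ℕ} (b B : (Fin n → ℝ) → Matrix (Fin n) (Fin n) ℝ)
    (hbsmooth : ∀ i j, ContDiff ℝ (⊤ : ℕ∞) (fun x => b x i j))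
    (hBsmooth : ∀ i j, ContDiff ℝ (⊤ : ℕ∞) (fun x => B x i j))
    (hbsym : ∀ x, (b x).transpose = b x) (hbdiag : ∀ x i, b x i i = 0)
    (hBsym : ∀ x, (B x).transpose = B x) (hBdiag : ∀ x i, B x i i = 0)
    (hDE : ∀ (k l : Fin n) (x : Fin n → ℝ) (i j : Fin n),
      pd l (fun y => mbr (b y) (eMat ℝ k) i j) x
        - pd k (fun y => mbr (b y) (eMat ℝ l) i j) x
        + mbr (mbr (b x) (eMat ℝ k)) (mbr (b x) (eMat ℝ l)) i j = 0)
    (hlDE : ∀ (k l : Fin n) (x : Fin n → ℝ) (i j : Fin n),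
      pd l (fun y => mbr (B y) (eMat ℝ k) i j) x
        - pd k (fun y => mbr (B y) (eMat ℝ l) i j) x
        + mbr (mbr (B x) (eMat ℝ k)) (mbr (b x) (eMat ℝ l)) i j
        + mbr (mbr (b x) (eMat ℝ k)) (mbr (B x) (eMat ℝ l)) i j = 0) :
    ∀ (k l : Fin n) (x : Fin n → ℝ) (i j : Fin n),
      pd l (fun y => diagPart (mbr (mbr (b y) (eMat ℝ k)) (B y)) i j) x
        = pd k (fun y => diagPart (mbr (mbr (b y) (eMat ℝ l)) (B y)) i j) x := by
  intro k l x i j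
  -- symmetry of entries
  have hbs : ∀ (y : Fin n → ℝ) (a c : Fin n), b y a c = b y c a := by
    intro y a c; rw [← Matrix.transpose_apply (b y), hbsym y]
  have hBs : ∀ (y : Fin n → ℝ) (a c : Fin n), B y a c = B y c a := by
    intro y a c; rw [← Matrix.transpose_apply (B y), hBsym y]
  -- differentiability
  have hb' : ∀ (a c : Fin n), DifferentiableAt ℝ (fun y => b y a c) x :=
    fun a c => ((hbsmooth a c).differentiable (by simp)).differentiableAt
  have hB' : ∀ (a c : Fin n), DifferentiableAt ℝ (fun y => B y a c) x :=
    fun a c => ((hBsmooth a c).differentiable (by simp)).differentiableAt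
  by_cases hij : i = j
  swap
  · have e1 : ∀ (k : Fin n) (y : Fin n → ℝ),
        diagPart (mbr (mbr (b y) (eMat ℝ k)) (B y)) i j = 0 := by
      intro k y; simp [diagPart, Matrix.diagonal_apply_ne _ hij]
    rw [pd_congr (e1 k) x, pd_congr (e1 l) x, pd_const, pd_const]
  subst hij
  -- diagonal entry formula
  have diagE : ∀ (k : Fin n) (y : Fin n → ℝ),
      diagPart (mbr (mbr (b y) (eMat ℝ k)) (B y)) i i
        = 2 * (b y i k * B y i k)
          - (if i = k then 2 * ∑ m, b y k m * B y m k else 0) := by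
    intro k y
    have h1 : (mbr (b y) (eMat ℝ k) * B y) i i
        = b y i k * B y k i - (if i = k then ∑ m, b y k m * B y m i else 0) := by
      rw [Matrix.mul_apply]
      have : ∀ m : Fin n, mbr (b y) (eMat ℝ k) i m * B y m i
          = ((if m = k then b y i k else 0) - (if i = k then b y k m else 0)) * B y m i := by
        intro m; rw [comm_e_apply]
      rw [Finset.sum_congr rfl fun m _ => this m]
      by_cases hi : i = k <;>
        simp [sub_mul, ite_mul, Finset.sum_sub_distrib, hi, Finset.sum_ite_eq,
          Finset.sum_ite_eq', eq_comm]
    have h2 : (B y * mbr (b y) (eMat ℝ k)) i i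
        = (if i = k then ∑ m, B y i m * b y m k else 0) - B y i k * b y k i := by
      rw [Matrix.mul_apply]
      have : ∀ m : Fin n, B y i m * mbr (b y) (eMat ℝ k) m i
          = B y i m * ((if i = k then b y m k else 0) - (if m = k then b y k i else 0)) := by
        intro m; rw [comm_e_apply]
      rw [Finset.sum_congr rfl fun m _ => this m]
      by_cases hi : i = k <;>
        simp [mul_sub, mul_ite, Finset.sum_sub_distrib, hi, Finset.sum_ite_eq,
          Finset.sum_ite_eq', eq_comm]
    have : diagPart (mbr (mbr (b y) (eMat ℝ k)) (B y)) i i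
        = (mbr (b y) (eMat ℝ k) * B y) i i - (B y * mbr (b y) (eMat ℝ k)) i i := by
      simp [diagPart, mbr]
    rw [this, h1, h2]
    by_cases hi : i = k
    · rw [hi]
      have hsum : (∑ m, B y k m * b y m k) = ∑ m, b y k m * B y m k :=
        Finset.sum_congr rfl fun m _ => by rw [hBs y k m, hbs y m k]; ring
      simp only [if_pos rfl, hbdiag y k, hBdiag y k, hsum]
      simp
      ring
    · simp only [hi, if_neg hi]
      rw [hbs y k i, hBs y k i]
      simp
      ring
  rw [pd_congr (diagE k) x, pd_congr (diagE l) x]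
  -- scalar Darboux-Egoroff consequences
  have F1 : ∀ k l i : Fin n, k ≠ l → i ≠ l → i ≠ k →
      pd l (fun y => b y i k) x = b x i l * b x l k := by
    intro k l i hkl hil hik
    have h := hDE k l x i k
    rw [comm_comm_entry] at h
    have e1 : (fun y => mbr (b y) (eMat ℝ k) i k) = fun y => b y i k :=
      funext fun y => by rw [comm_e_apply]; simp [hik]
    have e2 : (fun y => mbr (b y) (eMat ℝ l) i k) = fun _ => (0:ℝ) :=
      funext fun y => by rw [comm_e_apply]; simp [hil, hkl]
    rw [e1, e2, pd_const] at h
    simp [hik, hil, hkl, Ne.symm hkl, hbdiag, hBdiag] at h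
    linarith
  have F2 : ∀ k l i : Fin n, k ≠ l → i ≠ l → i ≠ k →
      pd l (fun y => B y i k) x = B x i l * b x l k + b x i l * B x l k := by
    intro k l i hkl hil hik
    have h := hlDE k l x i k
    rw [comm_comm_entry, comm_comm_entry] at h
    have e1 : (fun y => mbr (B y) (eMat ℝ k) i k) = fun y => B y i k :=
      funext fun y => by rw [comm_e_apply]; simp [hik]
    have e2 : (fun y => mbr (B y) (eMat ℝ l) i k) = fun _ => (0:ℝ) :=
      funext fun y => by rw [comm_e_apply]; simp [hil, hkl]
    rw [e1, e2, pd_const] at h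
    simp [hik, hil, hkl, Ne.symm hkl, hbdiag, hBdiag] at h
    linarith
  have F3 : ∀ k l : Fin n, k ≠ l →
      pd l (fun y => b y k l) x + pd k (fun y => b y k l) x
        = -∑ m, b x k m * b x m l := by
    intro k l hkl
    have h := hDE k l x k l
    rw [comm_comm_entry] at h
    have e1 : (fun y => mbr (b y) (eMat ℝ k) k l) = fun y => -b y k l :=
      funext fun y => by rw [comm_e_apply]; simp [Ne.symm hkl]
    have e2 : (fun y => mbr (b y) (eMat ℝ l) k l) = fun y => b y k l :=
      funext fun y => by rw [comm_e_apply]; simp [hkl]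
    rw [e1, e2, pd_neg] at h
    simp [hkl, Ne.symm hkl, hbdiag, hBdiag] at h
    linarith
  have F4 : ∀ k l : Fin n, k ≠ l →
      pd l (fun y => B y k l) x + pd k (fun y => B y k l) x
        = -∑ m, (B x k m * b x m l + b x k m * B x m l) := by
    intro k l hkl
    have h := hlDE k l x k l
    rw [comm_comm_entry, comm_comm_entry] at h
    have e1 : (fun y => mbr (B y) (eMat ℝ k) k l) = fun y => -B y k l :=
      funext fun y => by rw [comm_e_apply]; simp [Ne.symm hkl]
    have e2 : (fun y => mbr (B y) (eMat ℝ l) k l) = fun y => B y k l :=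
      funext fun y => by rw [comm_e_apply]; simp [hkl]
    rw [e1, e2, pd_neg] at h
    simp [hkl, Ne.symm hkl, hbdiag, hBdiag] at h
    have hsplit : (∑ m, (B x k m * b x m l + b x k m * B x m l))
        = (∑ m, B x k m * b x m l) + ∑ m, b x k m * B x m l := Finset.sum_add_distrib
    rw [hsplit]
    linarith
  -- main computation for the case i = k (with k ≠ l)
  have main : ∀ k l : Fin n, k ≠ l →
      pd l (fun y => 2 * (b y k k * B y k k)
          - if k = k then 2 * ∑ m, b y k m * B y m k else 0) x
        = pd k (fun y => 2 * (b y k l * B y k l)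
          - if k = l then 2 * ∑ m, b y l m * B y m l else 0) x := by
    intro k l hkl
    have eL : (fun y => 2 * (b y k k * B y k k)
          - if k = k then 2 * ∑ m, b y k m * B y m k else 0)
        = fun y => -(2 * ∑ m, b y k m * B y m k) := funext fun y => by simp [hbdiag]
    have eR : (fun y => 2 * (b y k l * B y k l)
          - if k = l then 2 * ∑ m, b y l m * B y m l else 0)
        = fun y => 2 * (b y k l * B y k l) := funext fun y => by simp [hkl]
    rw [eL, eR, pd_neg,
      pd_const_mul 2 (DifferentiableAt.fun_sum fun m _ => (hb' k m).fun_mul (hB' m k)),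
      pd_sum _ _ (fun m _ => (hb' k m).fun_mul (hB' m k)),
      pd_const_mul 2 ((hb' k l).fun_mul (hB' k l)), pd_mul (hb' k l) (hB' k l)]
    have hterm : ∀ m : Fin n, pd l (fun y => b y k m * B y m k) x
        = pd l (fun y => b y k m) x * B x m k + b x k m * pd l (fun y => B y k m) x := by
      intro m
      rw [pd_mul (hb' k m) (hB' m k), pd_congr (fun y => hBs y m k) x]
    rw [Finset.sum_congr rfl fun m _ => hterm m]
    have hST : ∀ m : Fin n, m ≠ l →
        pd l (fun y => b y k m) x * B x m k + b x k m * pd l (fun y => B y k m) x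
          = B x k l * (b x k m * b x m l)
            + b x k l * (B x k m * b x m l + b x k m * B x m l) := by
      intro m hml
      by_cases hmk : m = k
      · subst hmk
        rw [pd_congr (fun y => hbdiag y m) x, pd_const]
        simp [hbdiag, hBdiag]
      · rw [F1 m l k hml hkl (fun h => hmk h.symm), F2 m l k hml hkl (fun h => hmk h.symm),
          hbs x l m, hBs x l m, hBs x m k]
        ring
    have hsplit : (∑ m, (pd l (fun y => b y k m) x * B x m k
          + b x k m * pd l (fun y => B y k m) x))
        = (∑ m, (B x k l * (b x k m * b x m l)
            + b x k l * (B x k m * b x m l + b x k m * B x m l)))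
          + (pd l (fun y => b y k l) x * B x l k + b x k l * pd l (fun y => B y k l) x)
          - (B x k l * (b x k l * b x l l)
            + b x k l * (B x k l * b x l l + b x k l * B x l l)) := by
      rw [← Finset.sum_erase_add Finset.univ _ (Finset.mem_univ l),
        ← Finset.sum_erase_add Finset.univ
          (fun m => B x k l * (b x k m * b x m l)
            + b x k l * (B x k m * b x m l + b x k m * B x m l)) (Finset.mem_univ l),
        Finset.sum_congr rfl (fun m hm => hST m (Finset.ne_of_mem_erase hm))]
      ring
    have hA1 : (∑ m, b x k m * b x m l)
        = -(pd l (fun y => b y k l) x + pd k (fun y => b y k l) x) := by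
      linarith [F3 k l hkl]
    have hA2 : (∑ m, (B x k m * b x m l + b x k m * B x m l))
        = -(pd l (fun y => B y k l) x + pd k (fun y => B y k l) x) := by
      linarith [F4 k l hkl]
    have hTsum : (∑ m, (B x k l * (b x k m * b x m l)
          + b x k l * (B x k m * b x m l + b x k m * B x m l)))
        = B x k l * (∑ m, b x k m * b x m l)
          + b x k l * (∑ m, (B x k m * b x m l + b x k m * B x m l)) := by
      rw [Finset.mul_sum, Finset.mul_sum, ← Finset.sum_add_distrib]
    rw [hsplit, hTsum, hA1, hA2, hbdiag x l, hBdiag x l, hBs x l k]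
    ring
  by_cases hkl : k = l
  · rw [hkl]
  · by_cases hik : i = k
    · rw [hik]; exact main k l hkl
    · by_cases hil : i = l
      · rw [hil]; exact (main l k (Ne.symm hkl)).symm
      · have eK : (fun y => 2 * (b y i k * B y i k)
              - if i = k then 2 * ∑ m, b y k m * B y m k else 0)
            = fun y => 2 * (b y i k * B y i k) := funext fun y => by simp [hik]
        have eL : (fun y => 2 * (b y i l * B y i l)
              - if i = l then 2 * ∑ m, b y l m * B y m l else 0)
            = fun y => 2 * (b y i l * B y i l) := funext fun y => by simp [hil]
        rw [eK, eL, pd_const_mul 2 ((hb' i k).fun_mul (hB' i k)), pd_mul (hb' i k) (hB' i k),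
          pd_const_mul 2 ((hb' i l).fun_mul (hB' i l)), pd_mul (hb' i l) (hB' i l),
          F1 k l i hkl hil hik, F2 k l i hkl hil hik,
          F1 l k i (Ne.symm hkl) hik hil, F2 l k i (Ne.symm hkl) hik hil,
          hbs x l k, hBs x l k]
        ring
end

section
/- Suppose β_{ij} (i ≠ j, β_{ij} = β_{ji}, β_{ii}=0) satisfy the Darboux–Egoroff system ∂_k β_{ij} = β_{ik}β_{kj} for pairwise distinct i,j,k and Σ_s ∂_s β_{ij} = 0. Fix l, and define ψ_i = -Σ_s β_{sl}² if i = l and ψ_i = β_{il}² if i ≠ l. Then the ψ_i satisfy the linearized potential system for the translation symmetry B_{ij} = ∂_l β_{ij}: namely ∂_k ψ_i = -2 Σ_s β_{is} ∂_l β_{is} when i = k, and ∂_k ψ_i = 2 β_{ik} ∂_l β_{ik} when i ≠ k. -/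
/-- The potentials `ψ_i` for the translation symmetry `B_{ij} = ∂_l β_{ij}`:
`ψ_l = -Σ_s β_{sl}²` and `ψ_i = β_{il}²` for `i ≠ l`. -/
noncomputable def psiPot {n : ℕ} (β : Fin n → Fin n → (Fin n → ℝ) → ℝ)
    (l i : Fin n) (x : Fin n → ℝ) : ℝ :=
  if i = l then -∑ s : Fin n, (β s l x) ^ 2 else (β i l x) ^ 2

lemma pd_sq {n : ℕ} (f : (Fin n → ℝ) → ℝ) (hf : Differentiable ℝ f) (k : Fin n)
    (x : Fin n → ℝ) : pd k (fun y => f y ^ 2) x = 2 * f x * pd k f x := by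
  have h := HasFDerivAt.fun_mul (hf x).hasFDerivAt (hf x).hasFDerivAt
  simp only [pd, pow_two, h.fderiv, ContinuousLinearMap.add_apply,
    ContinuousLinearMap.smul_apply, smul_eq_mul]
  ring

lemma pd_negsum {n : ℕ} (g : Fin n → (Fin n → ℝ) → ℝ) (hg : ∀ s, Differentiable ℝ (g s))
    (k : Fin n) (x : Fin n → ℝ) :
    pd k (fun y => -∑ s : Fin n, g s y) x = -∑ s : Fin n, pd k (g s) x := by
  have h : HasFDerivAt (fun y => ∑ s : Fin n, g s y) (∑ s : Fin n, fderiv ℝ (g s) x) x :=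
    HasFDerivAt.fun_sum fun s _ => (hg s x).hasFDerivAt
  simp [pd, h.neg.fderiv, h.fderiv]

lemma sum_ite_zero' {n : ℕ} (f : Fin n → ℝ) (a : Fin n) :
    ∑ s : Fin n, (if s = a then 0 else f s) = (∑ s : Fin n, f s) - f a := by
  have h : ∀ s : Fin n, (if s = a then (0:ℝ) else f s)
      = f s - (if s = a then f s else 0) := by
    intro s; split <;> simp
  rw [Finset.sum_congr rfl fun s _ => h s, Finset.sum_sub_distrib,
    Finset.sum_ite_eq' Finset.univ a f, if_pos (Finset.mem_univ a)]

theorem stmt_19 {n : ℕ} (β : Fin n → Fin n → (Fin n → ℝ) → ℝ)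
    (hsmooth : ∀ i j, ContDiff ℝ (⊤ : ℕ∞) (β i j))
    (hsym : ∀ i j, β i j = β j i)
    (hdiag : ∀ i, β i i = 0)
    (hDE : ∀ i j k, i ≠ j → j ≠ k → i ≠ k →
      ∀ x, pd k (β i j) x = β i k x * β k j x)
    (hsum : ∀ i j, i ≠ j → ∀ x, ∑ s : Fin n, pd s (β i j) x = 0)
    (l : Fin n) :
    ∀ (i k : Fin n) (x : Fin n → ℝ),
      (i = k → pd k (psiPot β l i) x = -2 * ∑ s : Fin n, β i s x * pd l (β i s) x) ∧
      (i ≠ k → pd k (psiPot β l i) x = 2 * β i k x * pd l (β i k) x) := by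
  have hdiff : ∀ i j, Differentiable ℝ (β i j) := fun i j => (hsmooth i j).differentiable (by simp)
  intro i k x
  by_cases hil : i = l
  · subst hil
    have hpsi : psiPot β i i = fun y => -∑ s : Fin n, (β s i y) ^ 2 := by
      funext y; simp [psiPot]
    have hexp : ∀ m : Fin n, pd m (psiPot β i i) x
        = -∑ s : Fin n, 2 * β s i x * pd m (β s i) x := by
      intro m
      rw [hpsi, pd_negsum _ (fun s => (hdiff s i).fun_pow 2) m x]
      congr 1
      exact Finset.sum_congr rfl fun s _ => pd_sq (β s i) (hdiff s i) m x
    constructor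
    · rintro rfl
      rw [hexp i, neg_mul, neg_inj, Finset.mul_sum]
      refine Finset.sum_congr rfl fun s _ => ?_
      rw [hsym s i]; ring
    · intro hik
      rw [hexp k]
      have key : ∀ s : Fin n, β s i x * pd k (β s i) x
          = (if s = i then 0 else β k i x * pd s (β k i) x) := by
        intro s
        by_cases hs : s = i
        · simp [hs, hdiag]
        · rw [if_neg hs]
          by_cases hsk : s = k
          · subst hsk; rfl
          · rw [hDE s i k hs hik hsk, hDE k i s (Ne.symm hik) (Ne.symm hs) (Ne.symm hsk),
              hsym s k]
            ring
      have : ∑ s : Fin n, 2 * β s i x * pd k (β s i) x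
          = 2 * ∑ s : Fin n, (if s = i then 0 else β k i x * pd s (β k i) x) := by
        rw [Finset.mul_sum]
        exact Finset.sum_congr rfl fun s _ => by rw [mul_assoc, key s]
      rw [this, sum_ite_zero']
      have h0 : ∑ s : Fin n, β k i x * pd s (β k i) x = 0 := by
        rw [← Finset.mul_sum, hsum k i (Ne.symm hik) x, mul_zero]
      rw [h0, hsym i k]
      ring
  · have hpsi : psiPot β l i = fun y => (β i l y) ^ 2 := by
      funext y; simp [psiPot, hil]
    have hexp : ∀ m : Fin n, pd m (psiPot β l i) x = 2 * β i l x * pd m (β i l) x := by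
      intro m; rw [hpsi]; exact pd_sq (β i l) (hdiff i l) m x
    constructor
    · rintro rfl
      rw [hexp i]
      have key : ∀ s : Fin n, β i s x * pd l (β i s) x
          = (if s = i then 0 else β i l x * pd s (β i l) x) := by
        intro s
        by_cases hs : s = i
        · simp [hs, hdiag]
        · rw [if_neg hs]
          by_cases hsl : s = l
          · subst hsl; rfl
          · rw [hDE i s l (Ne.symm hs) hsl hil, hDE i l s hil (Ne.symm hsl) (Ne.symm hs),
              hsym l s]
            ring
      rw [Finset.sum_congr rfl fun s _ => key s, sum_ite_zero']
      have h0 : ∑ s : Fin n, β i l x * pd s (β i l) x = 0 := by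
        rw [← Finset.mul_sum, hsum i l hil x, mul_zero]
      rw [h0]
      ring
    · intro hik
      rw [hexp k]
      by_cases hkl : k = l
      · subst hkl; rfl
      · rw [hDE i l k hil (fun h => hkl h.symm) hik, hDE i k l hik hkl hil, hsym k l]
        ring
end
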